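/- For every complex number s with Re(s) > 0 and s ≠ 1, the alternating series ∑_{n=1}^∞ (-1)^{n+1} n^{-s} converges and its sum equals (1 - 2·2^{-s}) ζ(s); that is, the alternating zeta function η satisfies η(s) = (1 - 2^{1-s}) ζ(s). -/

import Mathlib

/-!
Group the series in consecutive pairs `(2k+1)^{-s} - (2k+2)^{-s}`. By the mean value theorem such a
pair is `O(|s| k^{-Re s - 1})`, so the paired series converges absolutely and locally uniformly on
`Re s > 0` and is holomorphic there. For `Re s > 1` it can be rearranged into
`ζ(s) - 2 · 2^{-s} ζ(s)` (the even-indexed terms of `ζ` are `2^{-s} ζ(s)`), and the identity theorem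
on the connected set `{Re s > 0} \ {1}` extends this equality. The unpaired last term of an odd
partial sum tends to `0`.
-/

open Filter Complex Set Topology

lemma norm_ofReal_cpow_neg_sub_le {s : ℂ} (hs : -1 ≤ s.re) {a b : ℝ} (ha : 0 < a) (hab : a ≤ b) :
    ‖(a : ℂ) ^ (-s) - (b : ℂ) ^ (-s)‖ ≤ ‖s‖ * a ^ (-s.re - 1) * (b - a) := by
  have hderiv : ∀ x ∈ Icc a b,
      HasDerivWithinAt (fun y : ℝ => (y : ℂ) ^ (-s)) (-s * (x : ℂ) ^ (-s - 1)) (Icc a b) x :=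
    fun x hx => ((hasStrictDerivAt_cpow_const
      (ofReal_mem_slitPlane.2 (ha.trans_le hx.1))).hasDerivAt.comp_ofReal).hasDerivWithinAt
  have hbound : ∀ x ∈ Icc a b, ‖-s * (x : ℂ) ^ (-s - 1)‖ ≤ ‖s‖ * a ^ (-s.re - 1) := by
    intro x hx
    rw [norm_mul, norm_neg, norm_cpow_eq_rpow_re_of_pos (ha.trans_le hx.1), sub_re, neg_re, one_re]
    exact mul_le_mul_of_nonneg_left
      (Real.rpow_le_rpow_of_nonpos ha hx.1 (by linarith)) (norm_nonneg s)
  have := (convex_Icc a b).norm_image_sub_le_of_norm_hasDerivWithin_le hderiv hbound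
    (left_mem_Icc.2 hab) (right_mem_Icc.2 hab)
  rwa [norm_sub_rev, Real.norm_of_nonneg (sub_nonneg.2 hab)] at this

lemma summable_rpow_two_mul_add_one {p : ℝ} (hp : p < -1) :
    Summable (fun k : ℕ => ((2 * k + 1 : ℕ) : ℝ) ^ p) :=
  (Real.summable_nat_rpow.2 hp).comp_injective fun _ _ h => by simpa using h

lemma isPreconnected_re_pos_diff_one : IsPreconnected ({z : ℂ | 0 < z.re} \ {1}) := by
  -- `A` is the half-plane slit along `[1, ∞)`; it is star-shaped about `1/2`, and the half-plane
  -- `1 < re z` covers the slit.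
  set A := {z : ℂ | 0 < z.re} ∩ {z | 2 - 2 * z ∈ slitPlane}
  have hA : StarConvex ℝ (1 / 2 : ℂ) A := by
    refine ((convex_halfSpace_re_gt 0).starConvex (by norm_num)).inter ?_
    intro z (hz : 2 - 2 * z ∈ slitPlane) a b ha hb hab
    have hab' : (a : ℂ) + b = 1 := by exact_mod_cast hab
    show 2 - 2 * (a • (1 / 2) + b • z) ∈ slitPlane
    convert starConvex_one_slitPlane hz ha hb hab using 1
    simp only [real_smul]
    linear_combination -2 * hab'
  have hA' : IsPreconnected A :=
    (hA.isPathConnected ⟨by norm_num, by norm_num [mem_slitPlane_iff]⟩).isConnected.isPreconnected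
  have hAB : IsPreconnected (A ∪ {z : ℂ | 1 < z.re}) :=
    hA'.union' ⟨2 + I, ⟨by simp, by simp [mem_slitPlane_iff]⟩, by simp⟩
      (convex_halfSpace_re_gt 1).isPreconnected
  convert hAB using 1
  ext z
  simp only [Set.mem_sdiff, mem_ofPred_eq, mem_singleton_iff, Complex.ext_iff, one_re, one_im,
    not_and, mem_slitPlane_iff, sub_re, re_ofNat, mul_re, im_ofNat, zero_mul, sub_zero, sub_pos,
    Nat.ofNat_pos, mul_lt_iff_lt_one_right, sub_im, mul_im, add_zero, zero_sub, ne_eq, neg_eq_zero,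
    mul_eq_zero, OfNat.ofNat_ne_zero, false_or, mem_union, mem_inter_iff, A]
  grind

noncomputable def etaPair (s : ℂ) (k : ℕ) : ℂ :=
  ((2 * k + 1 : ℕ) : ℂ) ^ (-s) - ((2 * k + 2 : ℕ) : ℂ) ^ (-s)

lemma norm_etaPair_le {s : ℂ} (hs : -1 ≤ s.re) (k : ℕ) :
    ‖etaPair s k‖ ≤ ‖s‖ * ((2 * k + 1 : ℕ) : ℝ) ^ (-s.re - 1) := by
  have h := norm_ofReal_cpow_neg_sub_le hs (a := 2 * k + 1) (b := 2 * k + 2)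
    (by positivity) (by linarith)
  rw [add_sub_add_left_eq_sub, show (2 : ℝ) - 1 = 1 by norm_num, mul_one] at h
  simpa [etaPair] using h

lemma summable_etaPair {s : ℂ} (hs : 0 < s.re) : Summable (etaPair s) :=
  .of_norm_bounded ((summable_rpow_two_mul_add_one (by linarith)).mul_left ‖s‖)
    (norm_etaPair_le (by linarith))

lemma differentiableOn_tsum_etaPair :
    DifferentiableOn ℂ (fun s => ∑' k, etaPair s k) {s | 0 < s.re} := by
  intro s hs
  set V := {z : ℂ | s.re / 2 < z.re} ∩ Metric.ball 0 (‖s‖ + 1)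
  have hV : IsOpen V := (isOpen_lt continuous_const continuous_re).inter Metric.isOpen_ball
  have hsV : s ∈ V := ⟨show s.re / 2 < s.re by linarith [hs.out], by simp⟩
  refine (differentiableOn_tsum_of_summable_norm
    ((summable_rpow_two_mul_add_one (p := -(s.re / 2) - 1) (by linarith [hs.out])).mul_left
      (‖s‖ + 1)) (fun k => ?_) hV (fun k z hz => ?_) |>.differentiableAt
      (hV.mem_nhds hsV)).differentiableWithinAt
  · exact ((differentiable_neg.const_cpow (.inl (Nat.cast_ne_zero.2 (by omega)))).sub
      (differentiable_neg.const_cpow (.inl (Nat.cast_ne_zero.2 (by omega))))).differentiableOn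
  · refine (norm_etaPair_le (by linarith [hz.1.out, hs.out]) k).trans ?_
    have hz' : ‖z‖ < ‖s‖ + 1 := by simpa using hz.2
    refine mul_le_mul hz'.le (Real.rpow_le_rpow_of_exponent_le ?_ ?_) (by positivity)
      (by positivity)
    · exact_mod_cast Nat.le_add_left 1 (2 * k)
    · linarith [hz.1.out]

lemma hasSum_etaPair_of_one_lt_re {s : ℂ} (hs : 1 < s.re) :
    HasSum (etaPair s) ((1 - 2 * 2 ^ (-s)) * riemannZeta s) := by
  set f : ℕ → ℂ := fun n => ((n + 1 : ℕ) : ℂ) ^ (-s)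
  have hf : HasSum f (riemannZeta s) := by
    have hsum : Summable f := by
      simpa [f, cpow_neg] using
        (summable_nat_add_iff 1).2 (Complex.summable_one_div_nat_cpow.2 hs)
    convert hsum.hasSum using 1
    simp [zeta_eq_tsum_one_div_nat_add_one_cpow hs, f, cpow_neg]
  have hodd : HasSum (fun k => f (2 * k + 1)) (2 ^ (-s) * riemannZeta s) := by
    refine (hf.mul_left (2 ^ (-s))).congr_fun fun k => ?_
    simp only [f, show 2 * k + 1 + 1 = 2 * (k + 1) by ring, Nat.cast_mul,
      natCast_mul_natCast_cpow]
    norm_num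
  have heven : HasSum (fun k => f (2 * k)) (riemannZeta s - 2 ^ (-s) * riemannZeta s) := by
    have he := (hf.summable.comp_injective (mul_right_injective₀ two_ne_zero)).hasSum
    rw [← eq_sub_of_add_eq (hf.unique (he.even_add_odd hodd)).symm]
    exact he
  rw [show (1 - 2 * 2 ^ (-s)) * riemannZeta s
    = (riemannZeta s - 2 ^ (-s) * riemannZeta s) - 2 ^ (-s) * riemannZeta s by ring]
  exact heven.sub hodd

lemma tsum_etaPair {s : ℂ} (hs : 0 < s.re) (hs1 : s ≠ 1) :
    ∑' k, etaPair s k = (1 - 2 * 2 ^ (-s)) * riemannZeta s := by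
  have hU : IsOpen ({z : ℂ | 0 < z.re} \ {1}) :=
    (isOpen_lt continuous_const continuous_re).sdiff isClosed_singleton
  refine AnalyticOnNhd.eqOn_of_preconnected_of_eventuallyEq (z₀ := 2)
    (g := fun z => (1 - 2 * 2 ^ (-z)) * riemannZeta z)
    ((differentiableOn_tsum_etaPair.mono sdiff_subset).analyticOnNhd hU)
    (DifferentiableOn.analyticOnNhd (fun z hz => ?_) hU) isPreconnected_re_pos_diff_one
    (by norm_num) ?_ ⟨hs, hs1⟩
  · exact (((differentiable_neg.const_cpow (.inl two_ne_zero)).const_mul 2).const_sub 1 z |>.mul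
      (differentiableAt_riemannZeta hz.2)).differentiableWithinAt
  · have h2 : {z : ℂ | 1 < z.re} ∈ 𝓝 2 :=
      (isOpen_lt continuous_const continuous_re).mem_nhds (by norm_num)
    filter_upwards [h2] with z hz using (hasSum_etaPair_of_one_lt_re hz).tsum_eq

lemma sum_Icc_two_mul_alternating (s : ℂ) (M : ℕ) :
    ∑ n ∈ Finset.Icc 1 (2 * M), (-1 : ℂ) ^ (n + 1) * (n : ℂ) ^ (-s) =
      ∑ k ∈ Finset.range M, etaPair s k := by
  induction M with
  | zero => simp
  | succ M ih =>
    rw [Finset.sum_range_succ, ← ih, show 2 * (M + 1) = 2 * M + 1 + 1 by ring,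
      Finset.sum_Icc_succ_top (by omega), Finset.sum_Icc_succ_top (by omega), add_assoc, etaPair]
    have hsign : (-1 : ℂ) ^ (2 * M) = 1 := by simp [pow_mul]
    congr 1
    push_cast
    simp only [pow_succ, hsign]
    ring_nf

lemma sum_Icc_alternating (s : ℂ) (N : ℕ) :
    ∑ n ∈ Finset.Icc 1 N, (-1 : ℂ) ^ (n + 1) * (n : ℂ) ^ (-s) =
      ∑ k ∈ Finset.range (N / 2), etaPair s k + if Even N then 0 else (N : ℂ) ^ (-s) := by
  obtain ⟨M, rfl | rfl⟩ := Nat.even_or_odd' N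
  · simp [sum_Icc_two_mul_alternating]
  · rw [Finset.sum_Icc_succ_top (by omega), sum_Icc_two_mul_alternating]
    simp [pow_succ, show (2 * M + 1) / 2 = M by omega]

/-- For `Re(s) > 0`, `s ≠ 1`, the alternating series `∑ (-1)^{n+1} n^{-s}`
converges to `(1 - 2·2^{-s}) ζ(s)`. -/
theorem eta_eq_alternating_sum (s : ℂ) (hs : 0 < s.re) (hs1 : s ≠ 1) :
    Tendsto (fun N : ℕ => ∑ n ∈ Finset.Icc 1 N, (-1 : ℂ) ^ (n + 1) * (n : ℂ) ^ (-s))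
      atTop (nhds ((1 - 2 * (2 : ℂ) ^ (-s)) * riemannZeta s)) := by
  have hpairs : Tendsto (fun N => ∑ k ∈ Finset.range (N / 2), etaPair s k) atTop
      (𝓝 ((1 - 2 * 2 ^ (-s)) * riemannZeta s)) := by
    rw [← tsum_etaPair hs hs1]
    exact (summable_etaPair hs).hasSum.tendsto_sum_nat.comp
      (Nat.tendsto_div_const_atTop two_ne_zero)
  have hlast : Tendsto (fun N : ℕ => if Even N then 0 else (N : ℂ) ^ (-s)) atTop (𝓝 0) := by
    refine squeeze_zero_norm (fun N => ?_)
      ((tendsto_rpow_neg_atTop hs).comp tendsto_natCast_atTop_atTop)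
    split_ifs
    · simp only [norm_zero, Function.comp_apply]
      positivity
    · rw [norm_natCast_cpow_of_re_ne_zero _ (by simpa using hs.ne'), neg_re]
      rfl
  simpa [sum_Icc_alternating] using hpairs.add hlast
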